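/- arXiv:quant-ph/0008047 — 3 statements merged into one kernel-verified Lean document; each statement's English description precedes it below -/
import Mathlib

section
/- The fidelity of p.p.t. distillation F_Γ is convex in the state and concave in 1/K: for states ρ, ρ₁, ρ₂ on ℂ^a ⊗ ℂ^b, real numbers K, K₁, K₂ > 0, and 0 ≤ π ≤ 1, one has F_Γ(πρ₁ + (1−π)ρ₂; K) ≤ π·F_Γ(ρ₁;K) + (1−π)·F_Γ(ρ₂;K), and F_Γ(ρ; K₁K₂/(πK₂ + (1−π)K₁)) ≥ π·F_Γ(ρ;K₁) + (1−π)·F_Γ(ρ;K₂). -/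
open Matrix Filter
open scoped ComplexOrder

noncomputable section

/-- Partial transpose on the second tensor factor:
`ptrans M ((i,j),(k,l)) = M ((i,l),(k,j))`. -/
def ptrans {ι κ : Type*} (M : Matrix (ι × κ) (ι × κ) ℂ) : Matrix (ι × κ) (ι × κ) ℂ :=
  fun x y => M (x.1, y.2) (y.1, x.2)

/-- Fidelity of `K`-state p.p.t. distillation:
the supremum of `Tr(Fρ)` over Hermitian `F` with `0 ≤ F ≤ 1` and `-1/K ≤ F^Γ ≤ 1/K`. -/
def FGamma {ι κ : Type*} [Fintype ι] [Fintype κ] [DecidableEq ι] [DecidableEq κ]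
    (ρ : Matrix (ι × κ) (ι × κ) ℂ) (K : ℝ) : ℝ :=
  sSup {x : ℝ | ∃ F : Matrix (ι × κ) (ι × κ) ℂ,
    F.PosSemidef ∧ (1 - F).PosSemidef ∧
    (((1 / K : ℝ) : ℂ) • 1 - ptrans F).PosSemidef ∧
    (ptrans F + ((1 / K : ℝ) : ℂ) • 1).PosSemidef ∧
    x = ((F * ρ).trace).re}

/-!
`Tr(Fρ)` is linear in `ρ`, so for a fixed test `F` the value on a mixture of states is the
mixture of the values; this gives convexity in the state. The constraints `0 ≤ F ≤ 1`,
`-t ≤ F^Γ ≤ t` are jointly convex in `(F, t)`, so mixing tests for `t₁ = 1/K₁` and `t₂ = 1/K₂`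
gives a test for `p t₁ + (1 - p) t₂`, the reciprocal of `K₁K₂ / (pK₂ + (1 - p)K₁)`; this gives
concavity in `1/K`.
-/

open scoped Pointwise

lemma Matrix.PosSemidef.smul_add_smul {n : Type*} {A B : Matrix n n ℂ} (hA : A.PosSemidef)
    (hB : B.PosSemidef) {p q : ℝ} (hp : 0 ≤ p) (hq : 0 ≤ q) :
    ((p : ℂ) • A + (q : ℂ) • B).PosSemidef :=
  (hA.smul (Complex.zero_le_real.2 hp)).add (hB.smul (Complex.zero_le_real.2 hq))

section PosSemidef

variable {n : Type*} [Fintype n]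

lemma Matrix.PosSemidef.trace_mul_nonneg {A B : Matrix n n ℂ} (hA : A.PosSemidef)
    (hB : B.PosSemidef) : 0 ≤ (A * B).trace := by
  classical
  open MatrixOrder in obtain ⟨C, rfl⟩ := CStarAlgebra.nonneg_iff_eq_star_mul_self.mp hA.nonneg
  rw [Matrix.mul_assoc, Matrix.trace_mul_comm]
  exact (hB.mul_mul_conjTranspose_same C).trace_nonneg

lemma Matrix.trace_mul_re_le_trace_re [DecidableEq n] {F ρ : Matrix n n ℂ}
    (hF : (1 - F).PosSemidef) (hρ : ρ.PosSemidef) : (F * ρ).trace.re ≤ ρ.trace.re := by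
  have h := (Complex.nonneg_iff.mp (hF.trace_mul_nonneg hρ)).1
  rw [Matrix.sub_mul, Matrix.one_mul, Matrix.trace_sub, Complex.sub_re] at h
  linarith

end PosSemidef

lemma Real.sSup_smul_add_smul {s t : Set ℝ} (hs₀ : s.Nonempty) (hs₁ : BddAbove s)
    (ht₀ : t.Nonempty) (ht₁ : BddAbove t) {a b : ℝ} (ha : 0 ≤ a) (hb : 0 ≤ b) :
    sSup (a • s + b • t) = a * sSup s + b * sSup t := by
  rw [csSup_add hs₀.smul_set (hs₁.smul_of_nonneg ha) ht₀.smul_set (ht₁.smul_of_nonneg hb),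
    Real.sSup_smul_of_nonneg ha, Real.sSup_smul_of_nonneg hb, smul_eq_mul, smul_eq_mul]

section PTrans

variable {ι κ : Type*}

@[simp]
lemma ptrans_zero : ptrans (0 : Matrix (ι × κ) (ι × κ) ℂ) = 0 := rfl

lemma ptrans_smul_add_smul (p q : ℂ) (A B : Matrix (ι × κ) (ι × κ) ℂ) :
    ptrans (p • A + q • B) = p • ptrans A + q • ptrans B := rfl

end PTrans

section PPT

variable {ι κ : Type*} [DecidableEq ι] [DecidableEq κ]

def pptTests (t : ℝ) : Set (Matrix (ι × κ) (ι × κ) ℂ) :=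
  {F | F.PosSemidef ∧ (1 - F).PosSemidef ∧ ((t : ℂ) • 1 - ptrans F).PosSemidef ∧
    (ptrans F + (t : ℂ) • 1).PosSemidef}

lemma zero_mem_pptTests {t : ℝ} (ht : 0 ≤ t) : (0 : Matrix (ι × κ) (ι × κ) ℂ) ∈ pptTests t := by
  have htI : ((t : ℂ) • (1 : Matrix (ι × κ) (ι × κ) ℂ)).PosSemidef :=
    PosSemidef.one.smul (Complex.zero_le_real.2 ht)
  exact ⟨.zero, by simpa using PosSemidef.one, by simpa using htI, by simpa using htI⟩

lemma smul_add_smul_mem_pptTests {F₁ F₂ : Matrix (ι × κ) (ι × κ) ℂ} {s t p q : ℝ}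
    (hF₁ : F₁ ∈ pptTests s) (hF₂ : F₂ ∈ pptTests t) (hp : 0 ≤ p) (hq : 0 ≤ q)
    (hpq : p + q = 1) : (p : ℂ) • F₁ + (q : ℂ) • F₂ ∈ pptTests (p * s + q * t) := by
  obtain ⟨hF₁, hF₁', hF₁Γ, hF₁Γ'⟩ := hF₁
  obtain ⟨hF₂, hF₂', hF₂Γ, hF₂Γ'⟩ := hF₂
  have hpqC : (p : ℂ) + q = 1 := by exact_mod_cast hpq
  refine ⟨hF₁.smul_add_smul hF₂ hp hq, ?_, ?_, ?_⟩
  · convert hF₁'.smul_add_smul hF₂' hp hq using 1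
    linear_combination (norm := module) -(hpqC • (1 : Matrix (ι × κ) (ι × κ) ℂ))
  · convert hF₁Γ.smul_add_smul hF₂Γ hp hq using 1
    rw [ptrans_smul_add_smul]
    push_cast
    module
  · convert hF₁Γ'.smul_add_smul hF₂Γ' hp hq using 1
    rw [ptrans_smul_add_smul]
    push_cast
    module

variable [Fintype ι] [Fintype κ]

def pptValues (ρ : Matrix (ι × κ) (ι × κ) ℂ) (t : ℝ) : Set ℝ :=
  (fun F => (F * ρ).trace.re) '' pptTests t

lemma FGamma_eq_sSup_pptValues (ρ : Matrix (ι × κ) (ι × κ) ℂ) (K : ℝ) :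
    FGamma ρ K = sSup (pptValues ρ (1 / K)) := by
  rw [FGamma, pptValues, pptTests]
  congr 1
  ext x
  constructor
  · rintro ⟨F, hF, hF', hFΓ, hFΓ', rfl⟩
    exact ⟨F, ⟨hF, hF', hFΓ, hFΓ'⟩, rfl⟩
  · rintro ⟨F, ⟨hF, hF', hFΓ, hFΓ'⟩, rfl⟩
    exact ⟨F, hF, hF', hFΓ, hFΓ', rfl⟩

lemma pptValues_nonempty (ρ : Matrix (ι × κ) (ι × κ) ℂ) {t : ℝ} (ht : 0 ≤ t) :
    (pptValues ρ t).Nonempty :=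
  ⟨_, Set.mem_image_of_mem _ (zero_mem_pptTests ht)⟩

lemma bddAbove_pptValues {ρ : Matrix (ι × κ) (ι × κ) ℂ} (hρ : ρ.PosSemidef) (t : ℝ) :
    BddAbove (pptValues ρ t) := by
  refine ⟨ρ.trace.re, ?_⟩
  rintro _ ⟨F, ⟨-, hF, -⟩, rfl⟩
  exact trace_mul_re_le_trace_re hF hρ

lemma pptValues_smul_add_smul_subset (ρ₁ ρ₂ : Matrix (ι × κ) (ι × κ) ℂ) (p q t : ℝ) :
    pptValues ((p : ℂ) • ρ₁ + (q : ℂ) • ρ₂) t ⊆ p • pptValues ρ₁ t + q • pptValues ρ₂ t := by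
  rintro _ ⟨F, hF, rfl⟩
  refine ⟨_, Set.smul_mem_smul_set (Set.mem_image_of_mem _ hF), _,
    Set.smul_mem_smul_set (Set.mem_image_of_mem _ hF), ?_⟩
  simp [Matrix.mul_add, Matrix.trace_add]

lemma smul_pptValues_add_smul_subset (ρ : Matrix (ι × κ) (ι × κ) ℂ) {p q : ℝ} (hp : 0 ≤ p)
    (hq : 0 ≤ q) (hpq : p + q = 1) (s t : ℝ) :
    p • pptValues ρ s + q • pptValues ρ t ⊆ pptValues ρ (p * s + q * t) := by
  rintro _ ⟨_, ⟨_, ⟨F₁, hF₁, rfl⟩, rfl⟩, _, ⟨_, ⟨F₂, hF₂, rfl⟩, rfl⟩, rfl⟩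
  refine ⟨_, smul_add_smul_mem_pptTests hF₁ hF₂ hp hq hpq, ?_⟩
  simp [Matrix.add_mul, Matrix.trace_add]

end PPT

theorem FGamma_convex_concave_general {a b : ℕ}
    (ρ ρ₁ ρ₂ : Matrix (Fin a × Fin b) (Fin a × Fin b) ℂ)
    (hρ : ρ.PosSemidef) (hρ₁ : ρ₁.PosSemidef) (hρ₂ : ρ₂.PosSemidef)
    (K K₁ K₂ : ℝ) (hK : 0 < K) (hK₁ : 0 < K₁) (hK₂ : 0 < K₂)
    (p : ℝ) (hp₀ : 0 ≤ p) (hp₁ : p ≤ 1) :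
    FGamma (((p : ℝ) : ℂ) • ρ₁ + (((1 - p : ℝ)) : ℂ) • ρ₂) K ≤
        p * FGamma ρ₁ K + (1 - p) * FGamma ρ₂ K ∧
      p * FGamma ρ K₁ + (1 - p) * FGamma ρ K₂ ≤
        FGamma ρ ((K₁ * K₂) / (p * K₂ + (1 - p) * K₁)) := by
  have hq : 0 ≤ 1 - p := sub_nonneg.2 hp₁
  have hpq : p + (1 - p) = 1 := add_sub_cancel p 1
  have hinv : 1 / (K₁ * K₂ / (p * K₂ + (1 - p) * K₁)) = p * (1 / K₁) + (1 - p) * (1 / K₂) := by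
    field_simp
  have hne : ∀ (σ : Matrix (Fin a × Fin b) (Fin a × Fin b) ℂ) {L : ℝ}, 0 < L →
      (pptValues σ (1 / L)).Nonempty := fun σ _ hL => pptValues_nonempty σ (by positivity)
  simp only [FGamma_eq_sSup_pptValues, hinv]
  constructor
  · rw [← Real.sSup_smul_add_smul (hne ρ₁ hK) (bddAbove_pptValues hρ₁ _) (hne ρ₂ hK)
      (bddAbove_pptValues hρ₂ _) hp₀ hq]
    exact csSup_le_csSup (((bddAbove_pptValues hρ₁ _).smul_of_nonneg hp₀).add
      ((bddAbove_pptValues hρ₂ _).smul_of_nonneg hq)) (hne _ hK)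
      (pptValues_smul_add_smul_subset ρ₁ ρ₂ p (1 - p) _)
  · rw [← Real.sSup_smul_add_smul (hne ρ hK₁) (bddAbove_pptValues hρ _) (hne ρ hK₂)
      (bddAbove_pptValues hρ _) hp₀ hq]
    exact csSup_le_csSup (bddAbove_pptValues hρ _) ((hne ρ hK₁).smul_set.add (hne ρ hK₂).smul_set)
      (smul_pptValues_add_smul_subset ρ hp₀ hq hpq _ _)

/-- `F_Γ` is convex in the state and concave in `1/K`. -/
theorem FGamma_convex_concave {a b : ℕ}
    (ρ ρ₁ ρ₂ : Matrix (Fin a × Fin b) (Fin a × Fin b) ℂ)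
    (hρ : ρ.PosSemidef) (hρtr : ρ.trace = 1)
    (hρ₁ : ρ₁.PosSemidef) (hρ₁tr : ρ₁.trace = 1)
    (hρ₂ : ρ₂.PosSemidef) (hρ₂tr : ρ₂.trace = 1)
    (K K₁ K₂ : ℝ) (hK : 0 < K) (hK₁ : 0 < K₁) (hK₂ : 0 < K₂)
    (p : ℝ) (hp₀ : 0 ≤ p) (hp₁ : p ≤ 1) :
    FGamma (((p : ℝ) : ℂ) • ρ₁ + (((1 - p : ℝ)) : ℂ) • ρ₂) K ≤
        p * FGamma ρ₁ K + (1 - p) * FGamma ρ₂ K ∧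
      p * FGamma ρ K₁ + (1 - p) * FGamma ρ K₂ ≤
        FGamma ρ ((K₁ * K₂) / (p * K₂ + (1 - p) * K₁)) :=
  FGamma_convex_concave_general ρ ρ₁ ρ₂ hρ hρ₁ hρ₂ K K₁ K₂ hK hK₁ hK₂ p hp₀ hp₁
end
end

section
/- For any integer d ≥ 1 and any real K > 0, the fidelity of K-state p.p.t. distillation of the maximally entangled state satisfies F_Γ(Φ(d);K) = min(1, d/K). -/
open Matrix Filter
open scoped ComplexOrder

noncomputable section

/-- The maximally entangled state `Φ(d) = (1/d) ∑ |ii⟩⟨jj|`. -/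
def maxEnt (d : ℕ) : Matrix (Fin d × Fin d) (Fin d × Fin d) ℂ :=
  fun x y => if x.1 = x.2 ∧ y.1 = y.2 then (1 / (d : ℂ)) else 0

/-! The value `min 1 (d/K)` is attained by `F = c • Φ(d)` with `c = min 1 (d/K)`: `Φ(d)` is a
projection and `Φ(d)^Γ = (1/d) • S` for the swap matrix `S`, a Hermitian involution, so
`-(1/K) ≤ (c/d) • S ≤ 1/K` as soon as `c/d ≤ 1/K`.

Conversely `F ≤ 1` gives `Tr(FΦ) ≤ Tr Φ = 1`. The partial transpose preserves the trace pairing,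
so `Tr(FΦ) = (1/d) Tr(F^Γ S)`; writing `2 S = (1 + S) - (1 - S)` with both `1 ± S ≥ 0` and using
`-(1/K) ≤ F^Γ ≤ 1/K` against each of them gives `Tr(F^Γ S) ≤ Tr(1)/K = d²/K`. -/

open scoped MatrixOrder

namespace Matrix

variable {n 𝕜 : Type*} [Fintype n] [RCLike 𝕜]

theorem PosSemidef.trace_mul_nonneg_s3 {A B : Matrix n n 𝕜} (hA : A.PosSemidef)
    (hB : B.PosSemidef) : 0 ≤ (A * B).trace := by
  classical
  obtain ⟨X, rfl⟩ := CStarAlgebra.nonneg_iff_eq_star_mul_self.mp hB.nonneg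
  rw [star_eq_conjTranspose, ← mul_assoc, trace_mul_comm, ← mul_assoc]
  exact (hA.mul_mul_conjTranspose_same X).trace_nonneg

theorem trace_mul_le_trace_mul {A B ρ : Matrix n n 𝕜} (hAB : (B - A).PosSemidef)
    (hρ : ρ.PosSemidef) : (A * ρ).trace ≤ (B * ρ).trace := by
  rw [← sub_nonneg, ← trace_sub, ← sub_mul]
  exact hAB.trace_mul_nonneg_s3 hρ

variable [DecidableEq n]

theorem IsStarProjection.posSemidef_one_sub_smul {P : Matrix n n 𝕜} (hP : IsStarProjection P)
    {c : ℝ} (hc : c ≤ 1) : (1 - (c : 𝕜) • P).PosSemidef := by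
  have hsplit : 1 - (c : 𝕜) • P = ((1 - c : ℝ) : 𝕜) • P + (1 - P) := by
    push_cast; module
  rw [hsplit]
  exact (hP.nonneg.posSemidef.smul (RCLike.ofReal_nonneg.mpr (by linarith))).add
    hP.one_sub_nonneg.posSemidef

namespace IsHermitian

variable {S : Matrix n n 𝕜}

theorem posSemidef_one_add (hS : S.IsHermitian) (hSS : S * S = 1) : (1 + S).PosSemidef := by
  have hsq : (1 + S)ᴴ * (1 + S) = (2 : 𝕜) • (1 + S) := by
    rw [conjTranspose_add, conjTranspose_one, hS.eq, add_mul, mul_add, mul_add, hSS, two_smul]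
    simp only [mul_one, one_mul]
    abel
  have hhalf : 1 + S = ((2⁻¹ : ℝ) : 𝕜) • ((1 + S)ᴴ * (1 + S)) := by
    rw [hsq, smul_smul, RCLike.ofReal_inv, RCLike.ofReal_ofNat, inv_mul_cancel₀ two_ne_zero,
      one_smul]
  rw [hhalf]
  exact (posSemidef_conjTranspose_mul_self _).smul (RCLike.ofReal_nonneg.mpr (by norm_num))

theorem posSemidef_smul_one_add_smul (hS : S.IsHermitian) (hSS : S * S = 1) {α β : ℝ}
    (hβ : |β| ≤ α) : ((α : 𝕜) • 1 + (β : 𝕜) • S).PosSemidef := by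
  have hsplit : (α : 𝕜) • (1 : Matrix n n 𝕜) + (β : 𝕜) • S
      = (((α + β) / 2 : ℝ) : 𝕜) • (1 + S) + (((α - β) / 2 : ℝ) : 𝕜) • (1 + -S) := by
    push_cast; module
  rw [hsplit]
  refine ((hS.posSemidef_one_add hSS).smul ?_).add ((hS.neg.posSemidef_one_add ?_).smul ?_)
  · exact RCLike.ofReal_nonneg.mpr (by linarith [neg_abs_le β])
  · simpa using hSS
  · exact RCLike.ofReal_nonneg.mpr (by linarith [le_abs_self β])

theorem re_trace_mul_le (hS : S.IsHermitian) (hSS : S * S = 1) {G : Matrix n n 𝕜} {α : ℝ}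
    (hG₁ : ((α : 𝕜) • 1 - G).PosSemidef) (hG₂ : (G + (α : 𝕜) • 1).PosSemidef) :
    RCLike.re (G * S).trace ≤ α * Fintype.card n := by
  have hplus := trace_mul_le_trace_mul hG₁ (hS.posSemidef_one_add hSS)
  have hminus := trace_mul_le_trace_mul (A := -G) (by rwa [sub_neg_eq_add, add_comm])
    (hS.neg.posSemidef_one_add (by simpa using hSS))
  have hsum := add_le_add (RCLike.re_le_re hplus) (RCLike.re_le_re hminus)
  simp only [mul_add, mul_neg, mul_one, neg_mul, smul_mul, one_mul, trace_add, trace_neg,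
    trace_smul, trace_one, map_add, map_neg, smul_eq_mul, RCLike.re_ofReal_mul,
    RCLike.natCast_re] at hsum
  linarith

end IsHermitian

end Matrix

def swapMatrix (ι : Type*) [DecidableEq ι] : Matrix (ι × ι) (ι × ι) ℂ :=
  Equiv.Perm.permMatrix ℂ (Equiv.prodComm ι ι)

section SwapMatrix

variable {ι : Type*} [DecidableEq ι]

theorem isHermitian_swapMatrix : (swapMatrix ι).IsHermitian := by
  rw [IsHermitian, swapMatrix, conjTranspose_permMatrix]
  rfl

theorem swapMatrix_mul_self [Fintype ι] : swapMatrix ι * swapMatrix ι = 1 := by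
  rw [swapMatrix, ← permMatrix_mul, mul_eq_one_iff_inv_eq.mpr (Equiv.prodComm_symm ι ι),
    permMatrix_one]

end SwapMatrix

section PartialTranspose

variable {ι κ : Type*}

theorem ptrans_smul (c : ℂ) (M : Matrix (ι × κ) (ι × κ) ℂ) : ptrans (c • M) = c • ptrans M :=
  rfl

theorem trace_ptrans_mul_ptrans [Fintype ι] [Fintype κ] (A B : Matrix (ι × κ) (ι × κ) ℂ) :
    (ptrans A * ptrans B).trace = (A * B).trace := by
  simp only [trace, diag, mul_apply, ptrans, Fintype.sum_prod_type]
  refine Finset.sum_congr rfl fun _ _ => ?_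
  calc _ = ∑ a : κ, ∑ c : κ, ∑ b : ι, _ := Finset.sum_congr rfl fun _ _ => Finset.sum_comm
    _ = ∑ c : κ, ∑ a : κ, ∑ b : ι, _ := Finset.sum_comm
    _ = _ := Finset.sum_congr rfl fun _ _ => Finset.sum_comm

end PartialTranspose

section MaxEnt

variable {d : ℕ}

theorem isStarProjection_maxEnt : IsStarProjection (maxEnt d) := by
  refine ⟨?_, ?_⟩
  · ext ⟨a, b⟩ ⟨c, e⟩
    have : (d : ℂ) ≠ 0 := Nat.cast_ne_zero.2 (Fin.pos a).ne'
    by_cases hab : a = b <;> by_cases hce : c = e <;>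
      simp [maxEnt, mul_apply, Fintype.sum_prod_type, hab, hce, Finset.sum_ite_eq,
        mul_inv_cancel_left₀ this]
  · ext x y
    by_cases h1 : x.1 = x.2 <;> by_cases h2 : y.1 = y.2 <;> simp [maxEnt, h1, h2]

theorem trace_maxEnt (hd : d ≠ 0) : (maxEnt d).trace = 1 := by
  have : (d : ℂ) ≠ 0 := Nat.cast_ne_zero.2 hd
  simp [trace, maxEnt, Fintype.sum_prod_type, this]

theorem ptrans_maxEnt : ptrans (maxEnt d) = (1 / (d : ℂ)) • swapMatrix (Fin d) := by
  ext x y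
  by_cases h1 : x.1 = y.2 <;> by_cases h2 : y.1 = x.2 <;>
    simp [ptrans, maxEnt, swapMatrix, PEquiv.toMatrix_apply, Equiv.toPEquiv_apply, Prod.ext_iff,
      h1, h2, eq_comm]

theorem trace_smul_maxEnt_mul_maxEnt (hd : d ≠ 0) (c : ℂ) :
    (c • maxEnt d * maxEnt d).trace = c := by
  rw [smul_mul, isStarProjection_maxEnt.isIdempotentElem.eq, trace_smul, trace_maxEnt hd,
    smul_eq_mul, mul_one]

theorem posSemidef_ptrans_smul_maxEnt {c α : ℝ} (h : |c / d| ≤ α) :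
    ((α : ℂ) • 1 - ptrans ((c : ℂ) • maxEnt d)).PosSemidef ∧
      (ptrans ((c : ℂ) • maxEnt d) + (α : ℂ) • 1).PosSemidef := by
  have hΓ : ptrans ((c : ℂ) • maxEnt d) = ((c / d : ℝ) : ℂ) • swapMatrix (Fin d) := by
    rw [ptrans_smul, ptrans_maxEnt, smul_smul, mul_one_div, Complex.ofReal_div,
      Complex.ofReal_natCast]
  rw [hΓ, add_comm, sub_eq_add_neg, ← neg_smul, ← Complex.ofReal_neg]
  exact ⟨isHermitian_swapMatrix.posSemidef_smul_one_add_smul swapMatrix_mul_self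
      ((abs_neg _).trans_le h),
    isHermitian_swapMatrix.posSemidef_smul_one_add_smul swapMatrix_mul_self h⟩

theorem re_trace_mul_maxEnt_le_one (hd : d ≠ 0) {F : Matrix (Fin d × Fin d) (Fin d × Fin d) ℂ}
    (hF : (1 - F).PosSemidef) : (F * maxEnt d).trace.re ≤ 1 := by
  have h := Complex.re_le_re (trace_mul_le_trace_mul hF isStarProjection_maxEnt.nonneg.posSemidef)
  rwa [one_mul, trace_maxEnt hd, Complex.one_re] at h

theorem re_trace_mul_maxEnt_le {F : Matrix (Fin d × Fin d) (Fin d × Fin d) ℂ} {α : ℝ}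
    (h₁ : ((α : ℂ) • 1 - ptrans F).PosSemidef) (h₂ : (ptrans F + (α : ℂ) • 1).PosSemidef) :
    (F * maxEnt d).trace.re ≤ α * d := by
  have h := isHermitian_swapMatrix.re_trace_mul_le swapMatrix_mul_self h₁ h₂
  rw [Fintype.card_prod, Fintype.card_fin, Nat.cast_mul] at h
  rw [← trace_ptrans_mul_ptrans, ptrans_maxEnt, mul_smul_comm, trace_smul, smul_eq_mul]
  calc (1 / (d : ℂ) * (ptrans F * swapMatrix (Fin d)).trace).re
      = 1 / d * RCLike.re (ptrans F * swapMatrix (Fin d)).trace := by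
        rw [← Complex.ofReal_natCast, ← Complex.ofReal_one, ← Complex.ofReal_div,
          Complex.re_ofReal_mul]
        rfl
    _ ≤ 1 / d * (α * (d * d)) := mul_le_mul_of_nonneg_left h (by positivity)
    _ = α * ((d : ℝ)⁻¹ * d * d) := by ring
    _ = α * d := by rw [inv_mul_mul_self]

end MaxEnt

/-- `F_Γ(Φ(d); K) = min(1, d/K)`. -/
theorem FGamma_maxEnt (d : ℕ) (hd : 1 ≤ d) (K : ℝ) (hK : 0 < K) :
    FGamma (maxEnt d) K = min 1 ((d : ℝ) / K) := by
  have hd₀ : d ≠ 0 := Nat.one_le_iff_ne_zero.mp hd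
  set c := min 1 ((d : ℝ) / K)
  have hc₀ : 0 ≤ c := le_min zero_le_one (by positivity)
  have hcd : |c / d| ≤ 1 / K := by
    rw [abs_of_nonneg (by positivity), div_le_iff₀ (by positivity), one_div_mul_eq_div]
    exact min_le_right _ _
  refine IsGreatest.csSup_eq ⟨⟨(c : ℂ) • maxEnt d,
    isStarProjection_maxEnt.nonneg.posSemidef.smul (Complex.zero_le_real.mpr hc₀),
    isStarProjection_maxEnt.posSemidef_one_sub_smul (min_le_left _ _),
    (posSemidef_ptrans_smul_maxEnt hcd).1, (posSemidef_ptrans_smul_maxEnt hcd).2, ?_⟩, ?_⟩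
  · rw [trace_smul_maxEnt_mul_maxEnt hd₀, Complex.ofReal_re]
  · rintro _ ⟨F, -, hF, hΓ₁, hΓ₂, rfl⟩
    refine le_min (re_trace_mul_maxEnt_le_one hd₀ hF) ?_
    calc _ ≤ 1 / K * d := re_trace_mul_maxEnt_le hΓ₁ hΓ₂
      _ = d / K := one_div_mul_eq_div K d
end
end

section
/- Tensoring with a p.p.t. state does not change fidelity of p.p.t. distillation: for any real K > 0, any state ρ and any state ρ' whose partial transpose ρ'^Γ is positive semidefinite, F_Γ(ρ ⊗ ρ'; K) = F_Γ(ρ; K), where ρ ⊗ ρ' is regarded as a state on the bipartite system grouping the two first factors against the two second factors. -/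
open Matrix Filter
open scoped ComplexOrder

noncomputable section

/-- Tensor product of two bipartite matrices, regrouped as a bipartite matrix
(first factors against second factors). -/
def tensorBip {ι₁ κ₁ ι₂ κ₂ : Type*}
    (ρ₁ : Matrix (ι₁ × κ₁) (ι₁ × κ₁) ℂ) (ρ₂ : Matrix (ι₂ × κ₂) (ι₂ × κ₂) ℂ) :
    Matrix ((ι₁ × ι₂) × (κ₁ × κ₂)) ((ι₁ × ι₂) × (κ₁ × κ₂)) ℂ :=
  fun x y => ρ₁ (x.1.1, x.2.1) (y.1.1, y.2.1) * ρ₂ (x.1.2, x.2.2) (y.1.2, y.2.2)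

/-!
A test `F` for `ρ` gives the test `F ⊗ 1` for `ρ ⊗ ρ'` with the same value. Conversely, a test `G`
for `ρ ⊗ ρ'` gives the test `Tr₂[G (1 ⊗ ρ')]` for `ρ` with the same value: this map is the adjoint
of `X ↦ X ⊗ ρ'` for the trace pairing, it is unital and positive because `ρ'` is a state, and
after partial transposition it becomes the same map built from `ρ'^Γ`, which is again unital and
positive because `ρ'` is p.p.t. So both optimisation problems have the same set of values.
-/

open Matrix
open scoped ComplexOrder Kronecker

theorem Matrix.star_dotProduct_mulVec_eq_trace_mul_vecMulVec {n R : Type*} [Fintype n]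
    [CommSemiring R] [StarRing R] (M : Matrix n n R) (v : n → R) :
    star v ⬝ᵥ (M *ᵥ v) = (M * vecMulVec v (star v)).trace := by
  rw [mul_vecMulVec, trace_vecMulVec, dotProduct_comm]

open scoped MatrixOrder in
theorem Matrix.PosSemidef.trace_mul_nonneg_s6 {n : Type*} [Fintype n] [DecidableEq n]
    {G W : Matrix n n ℂ} (hG : G.PosSemidef) (hW : W.PosSemidef) : 0 ≤ (G * W).trace := by
  obtain ⟨B, rfl⟩ := CStarAlgebra.nonneg_iff_eq_star_mul_self.mp hW.nonneg
  rw [star_eq_conjTranspose, ← Matrix.mul_assoc, trace_mul_cycle]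
  exact (hG.mul_mul_conjTranspose_same B).trace_nonneg

lemma ptrans_one {ι κ : Type*} [DecidableEq ι] [DecidableEq κ] :
    ptrans (1 : Matrix (ι × κ) (ι × κ) ℂ) = 1 := by
  ext ⟨i, k⟩ ⟨i', k'⟩
  by_cases hi : i = i' <;> by_cases hk : k = k' <;> simp [ptrans, one_apply, hi, hk, eq_comm]

lemma trace_ptrans {ι κ : Type*} [Fintype ι] [Fintype κ] (M : Matrix (ι × κ) (ι × κ) ℂ) :
    (ptrans M).trace = M.trace :=
  rfl

section tensorBip

variable {ι₁ κ₁ ι₂ κ₂ : Type*}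

lemma tensorBip_eq_submatrix_kronecker (A : Matrix (ι₁ × κ₁) (ι₁ × κ₁) ℂ)
    (B : Matrix (ι₂ × κ₂) (ι₂ × κ₂) ℂ) :
    tensorBip A B = (A ⊗ₖ B).submatrix (Equiv.prodProdProdComm ι₁ ι₂ κ₁ κ₂)
      (Equiv.prodProdProdComm ι₁ ι₂ κ₁ κ₂) :=
  rfl

lemma tensorBip_one [DecidableEq ι₁] [DecidableEq κ₁] [DecidableEq ι₂] [DecidableEq κ₂] :
    tensorBip (1 : Matrix (ι₁ × κ₁) (ι₁ × κ₁) ℂ) (1 : Matrix (ι₂ × κ₂) (ι₂ × κ₂) ℂ) = 1 := by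
  rw [tensorBip_eq_submatrix_kronecker, one_kronecker_one, submatrix_one_equiv]

lemma ptrans_tensorBip (A : Matrix (ι₁ × κ₁) (ι₁ × κ₁) ℂ) (B : Matrix (ι₂ × κ₂) (ι₂ × κ₂) ℂ) :
    ptrans (tensorBip A B) = tensorBip (ptrans A) (ptrans B) :=
  rfl

def tensorBipRight (B : Matrix (ι₂ × κ₂) (ι₂ × κ₂) ℂ) :
    Matrix (ι₁ × κ₁) (ι₁ × κ₁) ℂ →ₗ[ℂ]
      Matrix ((ι₁ × ι₂) × (κ₁ × κ₂)) ((ι₁ × ι₂) × (κ₁ × κ₂)) ℂ where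
  toFun A := tensorBip A B
  map_add' A C := by
    ext x y
    exact add_mul _ _ _
  map_smul' c A := by
    ext x y
    exact mul_assoc _ _ _

lemma tensorBipRight_apply (B : Matrix (ι₂ × κ₂) (ι₂ × κ₂) ℂ) (A : Matrix (ι₁ × κ₁) (ι₁ × κ₁) ℂ) :
    tensorBipRight B A = tensorBip A B :=
  rfl

variable [Fintype ι₁] [Fintype κ₁] [Fintype ι₂] [Fintype κ₂]

lemma tensorBip_mul (A C : Matrix (ι₁ × κ₁) (ι₁ × κ₁) ℂ) (B D : Matrix (ι₂ × κ₂) (ι₂ × κ₂) ℂ) :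
    tensorBip A B * tensorBip C D = tensorBip (A * C) (B * D) := by
  simp only [tensorBip_eq_submatrix_kronecker, submatrix_mul_equiv, mul_kronecker_mul]

lemma trace_tensorBip (A : Matrix (ι₁ × κ₁) (ι₁ × κ₁) ℂ) (B : Matrix (ι₂ × κ₂) (ι₂ × κ₂) ℂ) :
    (tensorBip A B).trace = A.trace * B.trace := by
  rw [← trace_kronecker]
  exact Equiv.sum_comp (Equiv.prodProdProdComm ι₁ ι₂ κ₁ κ₂) fun i => (A ⊗ₖ B) i i

lemma Matrix.PosSemidef.tensorBip {A : Matrix (ι₁ × κ₁) (ι₁ × κ₁) ℂ}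
    {B : Matrix (ι₂ × κ₂) (ι₂ × κ₂) ℂ} (hA : A.PosSemidef) (hB : B.PosSemidef) :
    (_root_.tensorBip A B).PosSemidef := by
  rw [tensorBip_eq_submatrix_kronecker]
  exact (hA.kronecker hB).submatrix _

end tensorBip

section partialTraceMul

variable {ι₁ κ₁ ι₂ κ₂ : Type*} [Fintype ι₂] [Fintype κ₂]

/-- `partialTraceMul σ G = Tr₂[G (1 ⊗ σ)]`. -/
def partialTraceMul (σ : Matrix (ι₂ × κ₂) (ι₂ × κ₂) ℂ) :
    Matrix ((ι₁ × ι₂) × (κ₁ × κ₂)) ((ι₁ × ι₂) × (κ₁ × κ₂)) ℂ →ₗ[ℂ]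
      Matrix (ι₁ × κ₁) (ι₁ × κ₁) ℂ where
  toFun G := Matrix.of fun x y => ∑ p : (ι₂ × κ₂) × (ι₂ × κ₂),
    G ((x.1, p.1.1), (x.2, p.1.2)) ((y.1, p.2.1), (y.2, p.2.2)) * σ p.2 p.1
  map_add' G H := by
    ext x y
    simp [add_mul, Finset.sum_add_distrib]
  map_smul' c G := by
    ext x y
    simp [Finset.mul_sum, mul_assoc]

lemma partialTraceMul_apply (σ : Matrix (ι₂ × κ₂) (ι₂ × κ₂) ℂ)
    (G : Matrix ((ι₁ × ι₂) × (κ₁ × κ₂)) ((ι₁ × ι₂) × (κ₁ × κ₂)) ℂ) (x y : ι₁ × κ₁) :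
    partialTraceMul σ G x y = ∑ p : (ι₂ × κ₂) × (ι₂ × κ₂),
      G ((x.1, p.1.1), (x.2, p.1.2)) ((y.1, p.2.1), (y.2, p.2.2)) * σ p.2 p.1 :=
  rfl

lemma partialTraceMul_one [DecidableEq ι₁] [DecidableEq κ₁] [DecidableEq ι₂] [DecidableEq κ₂]
    (σ : Matrix (ι₂ × κ₂) (ι₂ × κ₂) ℂ) :
    partialTraceMul (ι₁ := ι₁) (κ₁ := κ₁) σ 1 = σ.trace • 1 := by
  ext ⟨i, k⟩ ⟨i', k'⟩
  by_cases hi : i = i' <;> by_cases hk : k = k' <;>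
    simp [partialTraceMul_apply, one_apply, hi, hk, Fintype.sum_prod_type, ite_and, trace]

lemma ptrans_partialTraceMul (σ : Matrix (ι₂ × κ₂) (ι₂ × κ₂) ℂ)
    (G : Matrix ((ι₁ × ι₂) × (κ₁ × κ₂)) ((ι₁ × ι₂) × (κ₁ × κ₂)) ℂ) :
    ptrans (partialTraceMul σ G) = partialTraceMul (ptrans σ) (ptrans G) := by
  ext x y
  refine Fintype.sum_equiv
    ⟨fun p => ((p.1.1, p.2.2), (p.2.1, p.1.2)), fun p => ((p.1.1, p.2.2), (p.2.1, p.1.2)),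
      fun _ => rfl, fun _ => rfl⟩ _ _ fun _ => rfl

lemma partialTraceMul_isHermitian {σ : Matrix (ι₂ × κ₂) (ι₂ × κ₂) ℂ}
    {G : Matrix ((ι₁ × ι₂) × (κ₁ × κ₂)) ((ι₁ × ι₂) × (κ₁ × κ₂)) ℂ}
    (hσ : σ.IsHermitian) (hG : G.IsHermitian) : (partialTraceMul σ G).IsHermitian := by
  ext x y
  rw [conjTranspose_apply, partialTraceMul_apply, partialTraceMul_apply, star_sum]
  refine Fintype.sum_equiv (Equiv.prodComm _ _) _ _ fun p => ?_
  rw [star_mul', ← hG.apply, ← hσ.apply, star_star, star_star]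
  rfl

variable [Fintype ι₁] [Fintype κ₁]

lemma trace_partialTraceMul_mul (σ : Matrix (ι₂ × κ₂) (ι₂ × κ₂) ℂ)
    (G : Matrix ((ι₁ × ι₂) × (κ₁ × κ₂)) ((ι₁ × ι₂) × (κ₁ × κ₂)) ℂ)
    (ρ : Matrix (ι₁ × κ₁) (ι₁ × κ₁) ℂ) :
    (partialTraceMul σ G * ρ).trace = (G * tensorBip ρ σ).trace := by
  simp only [trace, diag_apply, mul_apply, partialTraceMul_apply, Finset.sum_mul,
    ← Finset.sum_product', Finset.univ_product_univ]
  refine Fintype.sum_equiv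
    ⟨fun t => (((t.1.1, t.2.2.1.1), (t.1.2, t.2.2.1.2)),
        ((t.2.1.1, t.2.2.2.1), (t.2.1.2, t.2.2.2.2))),
      fun s => ((s.1.1.1, s.1.2.1),
        ((s.2.1.1, s.2.2.1), ((s.1.1.2, s.1.2.2), (s.2.1.2, s.2.2.2)))),
      fun _ => rfl, fun _ => rfl⟩ _ _ fun _ => ?_
  simp only [Equiv.coe_fn_mk, tensorBip]
  ring

lemma Matrix.PosSemidef.partialTraceMul {σ : Matrix (ι₂ × κ₂) (ι₂ × κ₂) ℂ}
    {G : Matrix ((ι₁ × ι₂) × (κ₁ × κ₂)) ((ι₁ × ι₂) × (κ₁ × κ₂)) ℂ}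
    (hσ : σ.PosSemidef) (hG : G.PosSemidef) : (_root_.partialTraceMul σ G).PosSemidef := by
  classical
  refine .of_dotProduct_mulVec_nonneg (partialTraceMul_isHermitian hσ.1 hG.1) fun v => ?_
  rw [star_dotProduct_mulVec_eq_trace_mul_vecMulVec, trace_partialTraceMul_mul]
  exact hG.trace_mul_nonneg_s6 ((posSemidef_vecMulVec_self_star v).tensorBip hσ)

end partialTraceMul

section IsPPTTest

variable {ι κ ι' κ' : Type*} [DecidableEq ι] [DecidableEq κ]

def IsPPTTest (K : ℝ) (F : Matrix (ι × κ) (ι × κ) ℂ) : Prop :=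
  F.PosSemidef ∧ (1 - F).PosSemidef ∧ (((1 / K : ℝ) : ℂ) • 1 - ptrans F).PosSemidef ∧
    (ptrans F + ((1 / K : ℝ) : ℂ) • 1).PosSemidef

lemma FGamma_eq_sSup_image [Fintype ι] [Fintype κ] (ρ : Matrix (ι × κ) (ι × κ) ℂ) (K : ℝ) :
    FGamma ρ K = sSup ((fun F => ((F * ρ).trace).re) '' {F | IsPPTTest K F}) := by
  refine congrArg sSup (Set.ext fun x => ⟨?_, ?_⟩)
  · rintro ⟨F, h₀, h₁, h₂, h₃, rfl⟩
    exact ⟨F, ⟨h₀, h₁, h₂, h₃⟩, rfl⟩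
  · rintro ⟨F, ⟨h₀, h₁, h₂, h₃⟩, rfl⟩
    exact ⟨F, h₀, h₁, h₂, h₃, rfl⟩

variable [DecidableEq ι'] [DecidableEq κ']

lemma IsPPTTest.map {K : ℝ} {F : Matrix (ι × κ) (ι × κ) ℂ}
    {Φ Ψ : Matrix (ι × κ) (ι × κ) ℂ →ₗ[ℂ] Matrix (ι' × κ') (ι' × κ') ℂ}
    (hΦ₁ : Φ 1 = 1) (hΨ₁ : Ψ 1 = 1) (hΦ : ∀ P, P.PosSemidef → (Φ P).PosSemidef)
    (hΨ : ∀ P, P.PosSemidef → (Ψ P).PosSemidef) (hΦΨ : ∀ G, ptrans (Φ G) = Ψ (ptrans G))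
    (hF : IsPPTTest K F) : IsPPTTest K (Φ F) := by
  obtain ⟨h₀, h₁, h₂, h₃⟩ := hF
  refine ⟨hΦ F h₀, ?_, ?_, ?_⟩
  · rw [← hΦ₁, ← map_sub]
    exact hΦ _ h₁
  · rw [hΦΨ, ← hΨ₁, ← map_smul, ← map_sub]
    exact hΨ _ h₂
  · rw [hΦΨ, ← hΨ₁, ← map_smul, ← map_add]
    exact hΨ _ h₃

end IsPPTTest

theorem FGamma_tensor_ppt_general {a b c e : ℕ}
    (ρ : Matrix (Fin a × Fin b) (Fin a × Fin b) ℂ)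
    (ρ' : Matrix (Fin c × Fin e) (Fin c × Fin e) ℂ)
    (hρ' : ρ'.PosSemidef) (hρ'tr : ρ'.trace = 1)
    (hρ'ppt : (ptrans ρ').PosSemidef)
    (K : ℝ) :
    FGamma (tensorBip ρ ρ') K = FGamma ρ K := by
  rw [FGamma_eq_sSup_image, FGamma_eq_sSup_image]
  congr 1
  apply Set.Subset.antisymm
  · rintro _ ⟨G, hG, rfl⟩
    refine ⟨partialTraceMul ρ' G, hG.map (Ψ := partialTraceMul (ptrans ρ')) ?_ ?_
      (fun P hP => hρ'.partialTraceMul hP) (fun P hP => hρ'ppt.partialTraceMul hP)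
      (ptrans_partialTraceMul ρ'), congrArg Complex.re (trace_partialTraceMul_mul ρ' G ρ)⟩
    · rw [partialTraceMul_one, hρ'tr, one_smul]
    · rw [partialTraceMul_one, trace_ptrans, hρ'tr, one_smul]
  · rintro _ ⟨F, hF, rfl⟩
    refine ⟨tensorBipRight 1 F, hF.map (Ψ := tensorBipRight 1) tensorBip_one tensorBip_one
      (fun P hP => hP.tensorBip .one) (fun P hP => hP.tensorBip .one) (fun G => ?_), ?_⟩
    · rw [tensorBipRight_apply, tensorBipRight_apply, ptrans_tensorBip, ptrans_one]
    · dsimp only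
      rw [tensorBipRight_apply, tensorBip_mul, one_mul, trace_tensorBip, hρ'tr, mul_one]

/-- Tensoring with a p.p.t. state does not change the fidelity of p.p.t. distillation. -/
theorem FGamma_tensor_ppt {a b c e : ℕ}
    (ρ : Matrix (Fin a × Fin b) (Fin a × Fin b) ℂ)
    (ρ' : Matrix (Fin c × Fin e) (Fin c × Fin e) ℂ)
    (hρ : ρ.PosSemidef) (hρtr : ρ.trace = 1)
    (hρ' : ρ'.PosSemidef) (hρ'tr : ρ'.trace = 1)
    (hρ'ppt : (ptrans ρ').PosSemidef)
    (K : ℝ) (hK : 0 < K) :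
    FGamma (tensorBip ρ ρ') K = FGamma ρ K :=
  FGamma_tensor_ppt_general ρ ρ' hρ' hρ'tr hρ'ppt K
end
end
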